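/- arXiv:2204.08319 — 2 statements merged into one kernel-verified Lean document; each statement's English description precedes it below -/
import Mathlib

section
/- Safety certification via backprojection sets: under the hypotheses of the iterated over-approximation (P̄_0 = X_T and {x | f(x) ∈ P̄_{t+1}} ⊆ P̄_t for all -τ ≤ t < 0), if the initial set X_0 is disjoint from P̄_t for all t ∈ {-τ, ..., -1} and disjoint from X_T, then for every x_0 ∈ X_0 and every 0 ≤ k ≤ τ, f^{[k]}(x_0) ∉ X_T. -/
theorem safety_certification
    {n m : ℕ} (A : Matrix (Fin n) (Fin n) ℝ) (B : Matrix (Fin n) (Fin m) ℝ)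
    (c : Fin n → ℝ) (π : (Fin n → ℝ) → (Fin m → ℝ))
    (f : (Fin n → ℝ) → (Fin n → ℝ))
    (hf : ∀ x, f x = A.mulVec x + B.mulVec (π x) + c)
    (XT X0 : Set (Fin n → ℝ)) (τ : ℕ) (P : ℤ → Set (Fin n → ℝ))
    (hP0 : P 0 = XT)
    (hstep : ∀ t : ℤ, -(τ : ℤ) ≤ t → t < 0 → {x | f x ∈ P (t + 1)} ⊆ P t)
    (hdisj : ∀ t : ℤ, -(τ : ℤ) ≤ t → t ≤ -1 → Disjoint X0 (P t))
    (hdisjT : Disjoint X0 XT) :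
    ∀ x0 ∈ X0, ∀ k : ℕ, k ≤ τ → f^[k] x0 ∉ XT := by
  have key : ∀ k : ℕ, k ≤ τ → ∀ x, f^[k] x ∈ P 0 → x ∈ P (-(k : ℤ)) := by
    intro k
    induction k with
    | zero => intro _ x hx; simpa using hx
    | succ k ih =>
      intro hk x hx
      rw [Function.iterate_succ_apply] at hx
      have h1 : f x ∈ P (-(k : ℤ)) := ih (Nat.le_of_succ_le hk) _ hx
      have := hstep (-(k + 1 : ℕ) : ℤ) (by push_cast; omega) (by push_cast; omega)
      apply this
      have : (-(k + 1 : ℕ) : ℤ) + 1 = -(k : ℤ) := by push_cast; ring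
      simpa [this] using h1
  intro x0 hx0 k hk hxT
  have hx : x0 ∈ P (-(k : ℤ)) := key k hk x0 (by rwa [hP0])
  rcases Nat.eq_zero_or_pos k with h0 | hpos
  · subst h0; exact hdisjT.le_bot ⟨hx0, by simpa using hxT⟩ |>.elim
  · exact (hdisj (-(k : ℤ)) (by omega) (by omega)).le_bot ⟨hx0, hx⟩
end

section
/- Soundness of the ReBReach-LP refinement: let P̄_{-τ}, ..., P̄_0 = X_T be backprojection over-approximations, and for t ∈ {-τ, ..., -1} define the refined set P̄'_t = {x_t | ∃ u_t, x_t ∈ P̄_t ∧ π^L_t(x_t) ≤ u_t ≤ π^U_t(x_t) ∧ A x_t + B u_t + c ∈ P̄_{t+1}} where π^L_t(x) ≤ π(x) ≤ π^U_t(x) for all x ∈ P̄_t. Then P_t(X_T) ⊆ P̄'_t ⊆ P̄_t, where P_t(X_T) = {x | f^{[-t]}(x) ∈ X_T and f^{[s]}(x) ∈ P̄_{t+s} for 0 ≤ s ≤ -t} is the set of states following the BP chain into the target set. -/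
theorem ReBReachLP_sound
    {n m : ℕ} (A : Matrix (Fin n) (Fin n) ℝ) (B : Matrix (Fin n) (Fin m) ℝ)
    (c : Fin n → ℝ) (π : (Fin n → ℝ) → (Fin m → ℝ))
    (f : (Fin n → ℝ) → (Fin n → ℝ))
    (hf : ∀ x, f x = A.mulVec x + B.mulVec (π x) + c)
    (XT : Set (Fin n → ℝ)) (τ : ℕ) (P P' : ℤ → Set (Fin n → ℝ))
    (πL πU : ℤ → (Fin n → ℝ) → (Fin m → ℝ))
    (hP0 : P 0 = XT)
    (hstep : ∀ t : ℤ, -(τ : ℤ) ≤ t → t < 0 → {x | f x ∈ P (t + 1)} ⊆ P t)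
    (hrelax : ∀ t : ℤ, -(τ : ℤ) ≤ t → t < 0 → ∀ x ∈ P t, πL t x ≤ π x ∧ π x ≤ πU t x)
    (hP' : ∀ t : ℤ, -(τ : ℤ) ≤ t → t < 0 →
      P' t = {x | x ∈ P t ∧ ∃ u, πL t x ≤ u ∧ u ≤ πU t x ∧
        A.mulVec x + B.mulVec u + c ∈ P (t + 1)}) :
    ∀ t : ℤ, -(τ : ℤ) ≤ t → t < 0 →
      ({x | f^[(-t).toNat] x ∈ XT ∧
          ∀ s : ℤ, 0 ≤ s → s ≤ -t → f^[s.toNat] x ∈ P (t + s)} ⊆ P' t ∧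
        P' t ⊆ P t) := by
  intro t ht0 ht1
  constructor
  · intro x hx
    obtain ⟨hxT, hchain⟩ := hx
    have hx0 : x ∈ P t := by
      have := hchain 0 le_rfl (by omega)
      simpa using this
    have hx1 : f x ∈ P (t + 1) := by
      have := hchain 1 zero_le_one (by omega)
      simpa using this
    rw [hP' t ht0 ht1]
    refine ⟨hx0, π x, (hrelax t ht0 ht1 x hx0).1, (hrelax t ht0 ht1 x hx0).2, ?_⟩
    rw [← hf x]; exact hx1
  · rw [hP' t ht0 ht1]
    intro x hx
    exact hx.1
end
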